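/- arXiv:2505.05201 — 4 statements merged into one kernel-verified Lean document; each statement's English description precedes it below -/
import Mathlib

section
/- Let n ≥ 3 be an integer and 0 < s < 2. Set κ_{n,s} = ((n-s)(n-2))^{(n-2)/(2(2-s))} and define U₁ : ℝⁿ → ℝ by U₁(X) = κ_{n,s} (1 + |X|^{2-s})^{-(n-2)/(2-s)}. Then U₁ is smooth away from the origin, positive, and satisfies the pointwise equation -ΔU₁(X) = U₁(X)^{2⋆(s)-1} / |X|^s for all X ≠ 0, where 2⋆(s) = 2(n-s)/(n-2). -/
open MeasureTheory

/-- The Hardy-Sobolev constant `κ_{n,s}`. -/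
noncomputable def kappa (n : ℕ) (s : ℝ) : ℝ :=
  (((n : ℝ) - s) * ((n : ℝ) - 2)) ^ (((n : ℝ) - 2) / (2 * (2 - s)))

/-- The standard Hardy-Sobolev bubble `U₁` on `ℝⁿ`. -/
noncomputable def U1 (n : ℕ) (s : ℝ) (X : EuclideanSpace ℝ (Fin n)) : ℝ :=
  kappa n s * (1 + ‖X‖ ^ (2 - s)) ^ (-(((n : ℝ) - 2) / (2 - s)))

/-- The Euclidean Laplacian (sum of second partial derivatives). -/
noncomputable def lap (n : ℕ) (f : EuclideanSpace ℝ (Fin n) → ℝ)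
    (x : EuclideanSpace ℝ (Fin n)) : ℝ :=
  ∑ i : Fin n,
    fderiv ℝ (fun y => fderiv ℝ f y (EuclideanSpace.single i 1)) x (EuclideanSpace.single i 1)

/-! ### Auxiliary one-variable functions -/

noncomputable def phiHS (κ β c t : ℝ) : ℝ := κ * (1 + t ^ c) ^ (-β)
noncomputable def phiHS1 (κ β c t : ℝ) : ℝ :=
  κ * (-β) * c * ((1 + t ^ c) ^ (-β - 1) * t ^ (c - 1))
noncomputable def phiHS2 (κ β c t : ℝ) : ℝ :=
  κ * (-β) * c * (((-β - 1) * (1 + t ^ c) ^ (-β - 2) * (c * t ^ (c - 1))) * t ^ (c - 1)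
    + (1 + t ^ c) ^ (-β - 1) * ((c - 1) * t ^ (c - 2)))

lemma hasDerivAt_phiHS (κ β c t : ℝ) (ht : 0 < t) :
    HasDerivAt (phiHS κ β c) (phiHS1 κ β c t) t := by
  have hA : (0:ℝ) < 1 + t ^ c := by positivity
  have h1 : HasDerivAt (fun u : ℝ => 1 + u ^ c) (c * t ^ (c - 1)) t :=
    (Real.hasDerivAt_rpow_const (Or.inl ht.ne')).const_add 1
  have h2 : HasDerivAt (fun u : ℝ => u ^ (-β)) (-β * (1 + t ^ c) ^ (-β - 1)) (1 + t ^ c) :=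
    Real.hasDerivAt_rpow_const (Or.inl hA.ne')
  have := (h2.comp t h1).const_mul κ
  refine this.congr_deriv ?_
  unfold phiHS1
  ring

lemma hasDerivAt_phiHS1 (κ β c t : ℝ) (ht : 0 < t) :
    HasDerivAt (phiHS1 κ β c) (phiHS2 κ β c t) t := by
  have hA : (0:ℝ) < 1 + t ^ c := by positivity
  have h1 : HasDerivAt (fun u : ℝ => 1 + u ^ c) (c * t ^ (c - 1)) t :=
    (Real.hasDerivAt_rpow_const (Or.inl ht.ne')).const_add 1
  have h2 : HasDerivAt (fun u : ℝ => u ^ (-β - 1)) ((-β - 1) * (1 + t ^ c) ^ (-β - 2))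
      (1 + t ^ c) := by
    have := Real.hasDerivAt_rpow_const (x := 1 + t ^ c) (p := -β - 1) (Or.inl hA.ne')
    rwa [show -β - 1 - 1 = -β - 2 by ring] at this
  have h3 : HasDerivAt (fun u : ℝ => (1 + u ^ c) ^ (-β - 1))
      ((-β - 1) * (1 + t ^ c) ^ (-β - 2) * (c * t ^ (c - 1))) t := by
    have h := h2.comp t h1; exact h
  have h4 : HasDerivAt (fun u : ℝ => u ^ (c - 1)) ((c - 1) * t ^ (c - 2)) t := by
    have := Real.hasDerivAt_rpow_const (x := t) (p := c - 1) (Or.inl ht.ne')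
    rwa [show c - 1 - 1 = c - 2 by ring] at this
  have := (h3.mul h4).const_mul (κ * (-β) * c)
  have heq : phiHS1 κ β c
      = fun u : ℝ => κ * (-β) * c * ((1 + u ^ c) ^ (-β - 1) * u ^ (c - 1)) := rfl
  rw [heq]
  exact this

/-- The main one-variable algebraic identity. -/
lemma keyHS (n : ℕ) (hn : 3 ≤ n) (s r : ℝ) (hs2 : s < 2) (hr : 0 < r) :
    -(4 * r ^ 2 * phiHS2 (kappa n s) (((n:ℝ) - 2) / (2 - s)) ((2 - s) / 2) (r ^ 2)
        + 2 * n * phiHS1 (kappa n s) (((n:ℝ) - 2) / (2 - s)) ((2 - s) / 2) (r ^ 2))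
      = phiHS (kappa n s) (((n:ℝ) - 2) / (2 - s)) ((2 - s) / 2) (r ^ 2)
          ^ (2 * ((n : ℝ) - s) / ((n : ℝ) - 2) - 1) / r ^ s := by
  have hn3 : (3:ℝ) ≤ (n:ℝ) := by exact_mod_cast hn
  have hn2 : (0:ℝ) < (n:ℝ) - 2 := by linarith
  have h2s : (0:ℝ) < 2 - s := by linarith
  set c : ℝ := (2 - s) / 2 with hc
  set β : ℝ := ((n:ℝ) - 2) / (2 - s) with hβ
  set t : ℝ := r ^ 2 with htdef
  have ht : 0 < t := by positivity
  have hA : (0:ℝ) < 1 + t ^ c := by positivity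
  have hbase : (0:ℝ) < ((n:ℝ) - s) * ((n:ℝ) - 2) := by
    apply mul_pos <;> linarith
  have hκ : (0:ℝ) < kappa n s := Real.rpow_pos_of_pos hbase _
  have hrs : r ^ s = t ^ (s / 2) := by
    rw [htdef, ← Real.rpow_natCast r 2, ← Real.rpow_mul hr.le]
    congr 1; ring
  have hts : t ^ (s / 2) = (t ^ (c - 1))⁻¹ := by
    rw [← Real.rpow_neg ht.le]
    congr 1
    rw [hc]; ring
  have hphi : phiHS (kappa n s) β c t = kappa n s * (1 + t ^ c) ^ (-β) := rfl
  have hRHS : phiHS (kappa n s) β c t ^ (2 * ((n : ℝ) - s) / ((n : ℝ) - 2) - 1)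
      = (((n:ℝ) - s) * ((n:ℝ) - 2)) * kappa n s * (1 + t ^ c) ^ (-β - 2) := by
    rw [hphi, Real.mul_rpow hκ.le (Real.rpow_pos_of_pos hA _).le,
      ← Real.rpow_mul hA.le]
    have he1 : -β * (2 * ((n : ℝ) - s) / ((n : ℝ) - 2) - 1) = -β - 2 := by
      rw [hβ]; field_simp; ring
    rw [he1]
    have he2 : kappa n s ^ (2 * ((n : ℝ) - s) / ((n : ℝ) - 2) - 1)
        = (((n:ℝ) - s) * ((n:ℝ) - 2)) * kappa n s := by
      rw [kappa, ← Real.rpow_mul hbase.le]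
      have : ((n:ℝ) - 2) / (2 * (2 - s)) * (2 * ((n : ℝ) - s) / ((n : ℝ) - 2) - 1)
          = 1 + ((n:ℝ) - 2) / (2 * (2 - s)) := by
        field_simp; ring
      rw [this, Real.rpow_add hbase, Real.rpow_one]
    rw [he2]
  rw [hRHS, hrs, hts, div_eq_mul_inv, inv_inv]
  unfold phiHS1 phiHS2
  have hA1 : (1 + t ^ c) ^ (-β - 1) = (1 + t ^ c) ^ (-β - 2) * (1 + t ^ c) := by
    rw [show -β - 1 = (-β - 2) + 1 by ring, Real.rpow_add_one hA.ne']
  have ht1 : t ^ (c - 1) = t ^ (c - 2) * t := by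
    rw [show c - 1 = (c - 2) + 1 by ring, Real.rpow_add_one ht.ne']
  have htc : t ^ c = t ^ (c - 2) * t * t := by
    have h := Real.rpow_add ht (c - 2) 2
    rw [show c - 2 + 2 = c by ring] at h
    rw [h, show (2:ℝ) = ((2:ℕ):ℝ) by norm_num, Real.rpow_natCast]
    ring
  rw [hA1, ht1, htc]
  have hncast : (n:ℝ) = 2 * c * β + 2 := by
    rw [hc, hβ]; field_simp; ring
  have hscast : s = 2 - 2 * c := by rw [hc]; ring
  generalize (1 + (t ^ (c-2) * t * t)) ^ (-β - 2) = B
  generalize t ^ (c - 2) = P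
  rw [hncast, hscast]
  ring

lemma U1_eq_phiHS (n : ℕ) (s : ℝ) (X : EuclideanSpace ℝ (Fin n)) :
    U1 n s X = phiHS (kappa n s) (((n:ℝ) - 2) / (2 - s)) ((2 - s) / 2) (‖X‖ ^ 2) := by
  unfold U1 phiHS
  congr 2
  rw [← Real.rpow_natCast ‖X‖ 2, ← Real.rpow_mul (norm_nonneg X)]
  congr 1
  push_cast; ring

lemma hasFDerivAt_U1 (n : ℕ) (s : ℝ) (y : EuclideanSpace ℝ (Fin n)) (hy : y ≠ 0) :
    HasFDerivAt (U1 n s)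
      ((phiHS1 (kappa n s) (((n:ℝ) - 2) / (2 - s)) ((2 - s) / 2) (‖y‖ ^ 2))
        • ((2:ℕ) • (innerSL ℝ y))) y := by
  have h0 : (0:ℝ) < ‖y‖ ^ 2 := by
    have : ‖y‖ ≠ 0 := norm_ne_zero_iff.2 hy
    positivity
  have hU : U1 n s = fun z => phiHS (kappa n s) (((n:ℝ) - 2) / (2 - s)) ((2 - s) / 2) (‖z‖ ^ 2) :=
    funext (U1_eq_phiHS n s)
  rw [hU]
  have h := (hasDerivAt_phiHS (kappa n s) (((n:ℝ) - 2) / (2 - s)) ((2 - s) / 2) _ h0).comp_hasFDerivAt y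
    (hasStrictFDerivAt_norm_sq y).hasFDerivAt
  exact h

lemma fderiv_U1_apply (n : ℕ) (s : ℝ) (y : EuclideanSpace ℝ (Fin n)) (hy : y ≠ 0) (i : Fin n) :
    fderiv ℝ (U1 n s) y (EuclideanSpace.single i 1)
      = phiHS1 (kappa n s) (((n:ℝ) - 2) / (2 - s)) ((2 - s) / 2) (‖y‖ ^ 2) * (2 * y i) := by
  rw [(hasFDerivAt_U1 n s y hy).fderiv]
  simp [EuclideanSpace.inner_single_right, two_smul]
  ring

lemma second_deriv_U1 (n : ℕ) (s : ℝ) (x : EuclideanSpace ℝ (Fin n)) (hx : x ≠ 0) (i : Fin n) :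
    fderiv ℝ (fun y => fderiv ℝ (U1 n s) y (EuclideanSpace.single i 1)) x
        (EuclideanSpace.single i 1)
      = phiHS2 (kappa n s) (((n:ℝ) - 2) / (2 - s)) ((2 - s) / 2) (‖x‖ ^ 2)
          * (2 * x i) * (2 * x i)
        + phiHS1 (kappa n s) (((n:ℝ) - 2) / (2 - s)) ((2 - s) / 2) (‖x‖ ^ 2) * 2 := by
  set κ := kappa n s
  set β : ℝ := ((n:ℝ) - 2) / (2 - s)
  set c : ℝ := (2 - s) / 2
  have h0 : (0:ℝ) < ‖x‖ ^ 2 := by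
    have : ‖x‖ ≠ 0 := norm_ne_zero_iff.2 hx
    positivity
  have hev : (fun y => fderiv ℝ (U1 n s) y (EuclideanSpace.single i 1))
      =ᶠ[nhds x] (fun y => phiHS1 κ β c (‖y‖ ^ 2) * (2 * y i)) := by
    filter_upwards [IsOpen.mem_nhds isOpen_compl_singleton hx] with y hy
    exact fderiv_U1_apply n s y hy i
  rw [hev.fderiv_eq]
  have hA : HasFDerivAt (fun y : EuclideanSpace ℝ (Fin n) => phiHS1 κ β c (‖y‖ ^ 2))
      ((phiHS2 κ β c (‖x‖ ^ 2)) • ((2:ℕ) • (innerSL ℝ x))) x := by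
    have h := (hasDerivAt_phiHS1 κ β c _ h0).comp_hasFDerivAt x
      (hasStrictFDerivAt_norm_sq x).hasFDerivAt
    exact h
  have hB : HasFDerivAt (fun y : EuclideanSpace ℝ (Fin n) => (2:ℝ) * y i)
      ((2:ℝ) • (EuclideanSpace.proj i : EuclideanSpace ℝ (Fin n) →L[ℝ] ℝ)) x :=
    ((EuclideanSpace.proj (𝕜 := ℝ) i).hasFDerivAt (x := x)).const_mul (2:ℝ)
  have hAB : HasFDerivAt (fun y : EuclideanSpace ℝ (Fin n) =>
      phiHS1 κ β c (‖y‖ ^ 2) * (2 * y i)) _ x := hA.mul hB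
  rw [hAB.fderiv]
  simp [EuclideanSpace.inner_single_right, two_smul, EuclideanSpace.single_apply]
  ring

theorem stmt_2 (n : ℕ) (hn : 3 ≤ n) (s : ℝ) (hs0 : 0 < s) (hs2 : s < 2) :
    ContDiffOn ℝ (⊤ : ℕ∞) (U1 n s) {(0 : EuclideanSpace ℝ (Fin n))}ᶜ ∧
      (∀ X : EuclideanSpace ℝ (Fin n), 0 < U1 n s X) ∧
      (∀ X : EuclideanSpace ℝ (Fin n), X ≠ 0 →
        -lap n (U1 n s) X = U1 n s X ^ (2 * ((n : ℝ) - s) / ((n : ℝ) - 2) - 1) / ‖X‖ ^ s) := by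
  have hn3 : (3:ℝ) ≤ (n:ℝ) := by exact_mod_cast hn
  have hn2 : (0:ℝ) < (n:ℝ) - 2 := by linarith
  have h2s : (0:ℝ) < 2 - s := by linarith
  have hbase : (0:ℝ) < ((n:ℝ) - s) * ((n:ℝ) - 2) := by
    apply mul_pos <;> linarith
  have hκ : (0:ℝ) < kappa n s := Real.rpow_pos_of_pos hbase _
  refine ⟨?_, ?_, ?_⟩
  · -- smoothness
    intro x hx
    have hx0 : x ≠ 0 := hx
    have h0 : (0:ℝ) < ‖x‖ ^ 2 := by
      have : ‖x‖ ≠ 0 := norm_ne_zero_iff.2 hx0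
      positivity
    have hU : U1 n s
        = fun z => phiHS (kappa n s) (((n:ℝ) - 2) / (2 - s)) ((2 - s) / 2) (‖z‖ ^ 2) :=
      funext (U1_eq_phiHS n s)
    rw [hU]
    apply ContDiffAt.contDiffWithinAt
    have hsq : ContDiffAt ℝ (⊤ : ℕ∞) (fun z : EuclideanSpace ℝ (Fin n) => ‖z‖ ^ 2) x :=
      (contDiff_norm_sq ℝ).contDiffAt
    have hrp : ContDiffAt ℝ (⊤ : ℕ∞) (fun t : ℝ => t ^ ((2 - s) / 2)) (‖x‖ ^ 2) :=
      Real.contDiffAt_rpow_const_of_ne h0.ne'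
    have hadd : ContDiffAt ℝ (⊤ : ℕ∞) (fun t : ℝ => 1 + t ^ ((2 - s) / 2)) (‖x‖ ^ 2) :=
      contDiffAt_const.add hrp
    have hA : (0:ℝ) < 1 + (‖x‖ ^ 2) ^ ((2 - s) / 2) := by positivity
    have hrp2 : ContDiffAt ℝ (⊤ : ℕ∞) (fun u : ℝ => u ^ (-(((n:ℝ) - 2) / (2 - s))))
        (1 + (‖x‖ ^ 2) ^ ((2 - s) / 2)) :=
      Real.contDiffAt_rpow_const_of_ne hA.ne'
    have h5 : ContDiffAt ℝ (⊤ : ℕ∞)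
        (fun t : ℝ => (1 + t ^ ((2 - s) / 2)) ^ (-(((n:ℝ) - 2) / (2 - s)))) (‖x‖ ^ 2) :=
      ContDiffAt.comp (f := fun t : ℝ => 1 + t ^ ((2 - s) / 2)) (‖x‖ ^ 2) hrp2 hadd
    have hphi : ContDiffAt ℝ (⊤ : ℕ∞) (phiHS (kappa n s) (((n:ℝ) - 2) / (2 - s)) ((2 - s) / 2))
        (‖x‖ ^ 2) := by
      unfold phiHS
      exact contDiffAt_const.mul h5
    have h := hphi.comp x hsq
    exact h
  · -- positivity
    intro X
    unfold U1
    have : (0:ℝ) < 1 + ‖X‖ ^ (2 - s) := by positivity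
    positivity
  · -- the PDE
    intro X hX
    have h0 : (0:ℝ) < ‖X‖ := norm_pos_iff.2 hX
    have hsum : ∑ i : Fin n, (X i) ^ 2 = ‖X‖ ^ 2 := by
      rw [EuclideanSpace.norm_eq, Real.sq_sqrt (by positivity)]
      simp [Real.norm_eq_abs, sq_abs]
    have hlap : lap n (U1 n s) X
        = 4 * ‖X‖ ^ 2 * phiHS2 (kappa n s) (((n:ℝ) - 2) / (2 - s)) ((2 - s) / 2) (‖X‖ ^ 2)
          + 2 * n * phiHS1 (kappa n s) (((n:ℝ) - 2) / (2 - s)) ((2 - s) / 2) (‖X‖ ^ 2) := by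
      unfold lap
      rw [Finset.sum_congr rfl (fun i _ => second_deriv_U1 n s X hX i)]
      rw [Finset.sum_add_distrib, Finset.sum_const, Finset.card_univ, Fintype.card_fin]
      have : ∑ i : Fin n,
          phiHS2 (kappa n s) (((n:ℝ) - 2) / (2 - s)) ((2 - s) / 2) (‖X‖ ^ 2)
            * (2 * X i) * (2 * X i)
          = 4 * phiHS2 (kappa n s) (((n:ℝ) - 2) / (2 - s)) ((2 - s) / 2) (‖X‖ ^ 2)
            * ∑ i : Fin n, (X i) ^ 2 := by
        rw [Finset.mul_sum]
        apply Finset.sum_congr rfl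
        intro i _
        ring
      rw [this, hsum]
      push_cast
      ring
    rw [hlap, U1_eq_phiHS n s X]
    exact keyHS n hn s ‖X‖ hs2 h0
end

section
/- Let n ≥ 5, 0 < s < 2, and U₁(X) = κ_{n,s}(1+|X|^{2-s})^{-(n-2)/(2-s)} with κ_{n,s} = ((n-s)(n-2))^{(n-2)/(2(2-s))}. Then ∫_{ℝⁿ} |X|² |∇U₁|² dX / ∫_{ℝⁿ} U₁² dX = n(n-2)(n+2-s) / (2(2n-2-s)). -/
open MeasureTheory

/-!
With `c = 2 - s` and `p = (n - 2) / c`, `U₁` is the radial function `κ (1 + r ^ c) ^ (-p)`, so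
`|∇U₁| = |∂ᵣU₁|` and `r ∂ᵣU₁ = -κ (n - 2) r ^ c (1 + r ^ c) ^ (-p - 1)`. In polar coordinates both
integrals are `n |B₁| κ² ∫₀^∞ r ^ (c a - 1) (1 + r ^ c) ^ (-(a + b)) dr` (times `(n - 2)²` in the
numerator) with `b = (n - 4) / c`, and `a = n / c` in the denominator, `a = n / c + 2` in the
numerator. The substitutions `t = r ^ c` and `t = u / (1 - u)` turn this into the beta integral
`B(a, b) / c`, so the ratio is
`(n - 2)² B(a + 2, b) / B(a, b) = (n - 2)² a (a + 1) / ((a + b) (a + b + 1))`.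
-/

open Set ProbabilityTheory

theorem integral_Ioo_rpow_mul_one_sub_rpow_eq_beta {a b : ℝ} (ha : 0 < a) (hb : 0 < b) :
    ∫ u in Ioo (0 : ℝ) 1, u ^ (a - 1) * (1 - u) ^ (b - 1) = beta a b := by
  have hreal : ∀ u ∈ Ioo (0 : ℝ) 1, ((u ^ (a - 1) * (1 - u) ^ (b - 1) : ℝ) : ℂ) =
      (u : ℂ) ^ ((a : ℂ) - 1) * (1 - (u : ℂ)) ^ ((b : ℂ) - 1) := fun u hu => by
    rw [Complex.ofReal_mul, Complex.ofReal_cpow hu.1.le, Complex.ofReal_cpow (by linarith [hu.2])]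
    push_cast
    rfl
  apply Complex.ofReal_injective
  rw [← integral_complex_ofReal, setIntegral_congr_fun measurableSet_Ioo hreal,
    ← integral_Ioc_eq_integral_Ioo, ← intervalIntegral.integral_of_le zero_le_one,
    ← Complex.betaIntegral,
    Complex.betaIntegral_eq_Gamma_mul_div _ _ (by simpa) (by simpa), beta]
  simp only [Complex.ofReal_div, Complex.ofReal_mul, ← Complex.Gamma_ofReal, Complex.ofReal_add]

theorem image_div_one_sub_Ioo : (fun u : ℝ => u / (1 - u)) '' Ioo 0 1 = Ioi 0 := by
  ext t
  refine ⟨?_, fun (ht : 0 < t) => ⟨t / (1 + t), ⟨by positivity, ?_⟩, ?_⟩⟩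
  · rintro ⟨u, ⟨hu0, hu1⟩, rfl⟩
    exact div_pos hu0 (by linarith)
  · rw [div_lt_one (by positivity)]; linarith
  · field_simp
    ring

theorem integral_Ioi_rpow_mul_one_add_rpow_eq_integral_Ioo (a b : ℝ) :
    ∫ t in Ioi (0 : ℝ), t ^ (a - 1) * (1 + t) ^ (-(a + b)) =
      ∫ u in Ioo (0 : ℝ) 1, u ^ (a - 1) * (1 - u) ^ (b - 1) := by
  have hderiv : ∀ u ∈ Ioo (0 : ℝ) 1,
      HasDerivWithinAt (fun u => u / (1 - u)) ((1 - u) ^ 2)⁻¹ (Ioo 0 1) u := fun u hu => by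
    have h : (1 : ℝ) - u ≠ 0 := by linarith [hu.2]
    refine ((hasDerivAt_id' u).div ((hasDerivAt_id' u).const_sub 1) h).hasDerivWithinAt
      |>.congr_deriv ?_
    field_simp
    ring
  have hinj : InjOn (fun u : ℝ => u / (1 - u)) (Ioo 0 1) := fun x hx y hy hxy => by
    have hx1 : (1 : ℝ) - x ≠ 0 := by linarith [hx.2]
    have hy1 : (1 : ℝ) - y ≠ 0 := by linarith [hy.2]
    field_simp at hxy
    linarith
  rw [← image_div_one_sub_Ioo,
    integral_image_eq_integral_abs_deriv_smul measurableSet_Ioo hderiv hinj]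
  refine setIntegral_congr_fun measurableSet_Ioo fun u ⟨hu0, hu1⟩ => ?_
  have hu : 0 < 1 - u := by linarith
  have h1u : 1 + u / (1 - u) = (1 - u)⁻¹ := by field_simp; ring
  rw [smul_eq_mul, h1u, abs_of_pos (by positivity), Real.div_rpow hu0.le hu.le,
    Real.inv_rpow hu.le, Real.rpow_neg hu.le, inv_inv]
  have hexp : (1 - u) ^ (b - 1) = (1 - u) ^ (a + b) / (1 - u) ^ (a - 1) / (1 - u) ^ 2 := by
    rw [← Real.rpow_sub hu, ← Real.rpow_two, ← Real.rpow_sub hu]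
    ring_nf
  rw [hexp]
  field_simp

theorem integral_Ioi_rpow_mul_one_add_rpow_rpow_eq_beta_div {a b c : ℝ} (ha : 0 < a) (hb : 0 < b)
    (hc : 0 < c) :
    ∫ r in Ioi (0 : ℝ), r ^ (c * a - 1) * (1 + r ^ c) ^ (-(a + b)) = beta a b / c := by
  rw [← integral_Ioo_rpow_mul_one_sub_rpow_eq_beta ha hb,
    ← integral_Ioi_rpow_mul_one_add_rpow_eq_integral_Ioo,
    ← integral_comp_rpow_Ioi_of_pos hc (g := fun t => t ^ (a - 1) * (1 + t) ^ (-(a + b))),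
    ← integral_div]
  refine setIntegral_congr_fun measurableSet_Ioi fun r (hr : 0 < r) => ?_
  rw [smul_eq_mul, ← Real.rpow_mul hr.le, show c * a - 1 = c - 1 + c * (a - 1) by ring,
    Real.rpow_add hr]
  field_simp

theorem beta_add_two_left {a b : ℝ} (ha : 0 < a) (hab : 0 < a + b) :
    beta (a + 2) b = (a + 1) * a / ((a + b + 1) * (a + b)) * beta a b := by
  have hΓ : ∀ {x : ℝ}, 0 < x → Real.Gamma (x + 2) = (x + 1) * x * Real.Gamma x := fun {x} hx => by
    rw [show x + 2 = x + 1 + 1 by ring, Real.Gamma_add_one (by positivity),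
      Real.Gamma_add_one hx.ne', mul_assoc]
  rw [beta, beta, hΓ ha, show a + 2 + b = a + b + 2 by ring, hΓ hab]
  have := (Real.Gamma_pos_of_pos hab).ne'
  field_simp

section NormComp

variable {E : Type*} [NormedAddCommGroup E] [InnerProductSpace ℝ E] [CompleteSpace E]

theorem hasGradientAt_comp_norm {f : ℝ → ℝ} {f' : ℝ} {x : E} (hf : HasDerivAt f f' ‖x‖)
    (hx : x ≠ 0) : HasGradientAt (fun y => f ‖y‖) ((f' / ‖x‖) • x) x := by
  have hnorm := (hasStrictFDerivAt_norm_sq x).hasFDerivAt.sqrt (by positivity)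
  simp only [Real.sqrt_sq (norm_nonneg _)] at hnorm
  rw [hasGradientAt_iff_hasFDerivAt]
  refine (hf.comp_hasFDerivAt x hnorm).congr_fderiv ?_
  ext y
  have := norm_ne_zero_iff.mpr hx
  simp only [map_smul, InnerProductSpace.toDual_apply_apply, smul_apply,
    coe_innerSL_apply, smul_eq_mul, nsmul_eq_mul, Nat.cast_ofNat]
  field_simp

theorem norm_gradient_comp_norm {f : ℝ → ℝ} {x : E} (hf : DifferentiableAt ℝ f ‖x‖)
    (hx : x ≠ 0) : ‖gradient (fun y => f ‖y‖) x‖ = |deriv f ‖x‖| := by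
  rw [(hasGradientAt_comp_norm hf.hasDerivAt hx).gradient, norm_smul, norm_div, norm_norm,
    div_mul_cancel₀ _ (norm_ne_zero_iff.mpr hx), Real.norm_eq_abs]

end NormComp

noncomputable def bubbleProfile (κ c p r : ℝ) : ℝ := κ * (1 + r ^ c) ^ (-p)

theorem hasDerivAt_bubbleProfile (κ c p : ℝ) {r : ℝ} (hr : 0 < r) :
    HasDerivAt (bubbleProfile κ c p) (-(κ * p * c) * r ^ (c - 1) * (1 + r ^ c) ^ (-p - 1)) r := by
  have hbase : 1 + r ^ c ≠ 0 := by positivity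
  have := (((Real.hasDerivAt_rpow_const (p := c) (Or.inl hr.ne')).const_add 1).rpow_const
    (p := -p) (Or.inl hbase)).const_mul κ
  exact this.congr_deriv (by ring)

section BubbleProfile

variable {κ c p : ℝ} {n : ℕ}

theorem integral_Ioi_pow_mul_bubbleProfile_sq (hc : 0 < c) (hn : 0 < n) (hnp : n / c < 2 * p) :
    ∫ r in Ioi (0 : ℝ), r ^ (n - 1) * bubbleProfile κ c p r ^ 2 =
      κ ^ 2 * beta (n / c) (2 * p - n / c) / c := by
  rw [mul_div_assoc,
    ← integral_Ioi_rpow_mul_one_add_rpow_rpow_eq_beta_div (by positivity) (by linarith) hc,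
    ← integral_const_mul]
  refine setIntegral_congr_fun measurableSet_Ioi fun r (hr : 0 < r) => ?_
  rw [bubbleProfile, mul_div_cancel₀ _ hc.ne', ← Nat.cast_pred hn, Real.rpow_natCast,
    show -(n / c + (2 * p - n / c)) = -p * (2 : ℕ) by ring, Real.rpow_mul_natCast (by positivity)]
  ring

theorem integral_Ioi_pow_mul_sq_mul_deriv_bubbleProfile_sq (hc : 0 < c) (hn : 0 < n)
    (hnp : n / c < 2 * p) :
    ∫ r in Ioi (0 : ℝ), r ^ (n - 1) * (r ^ 2 * deriv (bubbleProfile κ c p) r ^ 2) =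
      (κ * p * c) ^ 2 * beta (n / c + 2) (2 * p - n / c) / c := by
  rw [mul_div_assoc,
    ← integral_Ioi_rpow_mul_one_add_rpow_rpow_eq_beta_div (by positivity) (by linarith) hc,
    ← integral_const_mul]
  refine setIntegral_congr_fun measurableSet_Ioi fun r (hr : 0 < r) => ?_
  have hr_exp : c * (n / c + 2) - 1 = (n - 1 : ℕ) + (2 : ℕ) + (c - 1) * (2 : ℕ) := by
    rw [Nat.cast_pred hn]
    field_simp
    ring
  rw [(hasDerivAt_bubbleProfile κ c p hr).deriv, hr_exp, Real.rpow_add hr, Real.rpow_add hr,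
    Real.rpow_natCast, Real.rpow_natCast, Real.rpow_mul_natCast hr.le,
    show -(n / c + 2 + (2 * p - n / c)) = (-p - 1) * (2 : ℕ) by ring,
    Real.rpow_mul_natCast (by positivity)]
  ring

end BubbleProfile

section HaarIntegral

variable {E : Type*} [NormedAddCommGroup E] [InnerProductSpace ℝ E] [FiniteDimensional ℝ E]
  [Nontrivial E] [MeasurableSpace E] [BorelSpace E] (μ : Measure E) [μ.IsAddHaarMeasure]
  {κ c p : ℝ}

local notation "d" => Module.finrank ℝ E

theorem integral_bubbleProfile_norm_sq (hc : 0 < c) (hdp : d / c < 2 * p) :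
    ∫ x, bubbleProfile κ c p ‖x‖ ^ 2 ∂μ =
      d * μ.real (Metric.ball 0 1) * (κ ^ 2 * beta (d / c) (2 * p - d / c) / c) := by
  have h := integral_fun_norm_addHaar μ fun r => bubbleProfile κ c p r ^ 2
  simp only [smul_eq_mul, nsmul_eq_mul] at h
  rw [h, integral_Ioi_pow_mul_bubbleProfile_sq hc Module.finrank_pos hdp]
  ring

theorem integral_sq_norm_mul_sq_norm_gradient_bubbleProfile (hc : 0 < c)
    (hdp : d / c < 2 * p) :
    ∫ x, ‖x‖ ^ 2 * ‖gradient (fun y => bubbleProfile κ c p ‖y‖) x‖ ^ 2 ∂μ =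
      d * μ.real (Metric.ball 0 1) * ((κ * p * c) ^ 2 * beta (d / c + 2) (2 * p - d / c) / c) := by
  have hradial : ∀ x : E, ‖x‖ ^ 2 * ‖gradient (fun y => bubbleProfile κ c p ‖y‖) x‖ ^ 2 =
      ‖x‖ ^ 2 * deriv (bubbleProfile κ c p) ‖x‖ ^ 2 := fun x => by
    rcases eq_or_ne x 0 with rfl | hx
    · simp
    rw [norm_gradient_comp_norm
      (hasDerivAt_bubbleProfile κ c p (norm_pos_iff.mpr hx)).differentiableAt hx, sq_abs]
  have h := integral_fun_norm_addHaar μ fun r => r ^ 2 * deriv (bubbleProfile κ c p) r ^ 2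
  simp only [smul_eq_mul, nsmul_eq_mul] at h
  rw [integral_congr_ae (.of_forall hradial), h,
    integral_Ioi_pow_mul_sq_mul_deriv_bubbleProfile_sq hc Module.finrank_pos hdp]
  ring

end HaarIntegral

theorem stmt_4_general (n : ℕ) (hn : 5 ≤ n) (s : ℝ) (hs2 : s < 2) :
    (∫ X : EuclideanSpace ℝ (Fin n), ‖X‖ ^ 2 * ‖gradient (U1 n s) X‖ ^ 2) /
        (∫ X : EuclideanSpace ℝ (Fin n), (U1 n s X) ^ 2) =
      (n : ℝ) * ((n : ℝ) - 2) * ((n : ℝ) + 2 - s) / (2 * (2 * (n : ℝ) - 2 - s)) := by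
  have hn' : (5 : ℝ) ≤ n := by exact_mod_cast hn
  have hc : 0 < 2 - s := by linarith
  have hdim : Module.finrank ℝ (EuclideanSpace ℝ (Fin n)) = n := finrank_euclideanSpace_fin
  have : Nontrivial (EuclideanSpace ℝ (Fin n)) :=
    Module.nontrivial_of_finrank_pos (R := ℝ) (by omega)
  have ha : 0 < (n : ℝ) / (2 - s) := by positivity
  have hb : 0 < 2 * (((n : ℝ) - 2) / (2 - s)) - n / (2 - s) := by
    rw [mul_div_assoc', div_sub_div_same]
    exact div_pos (by linarith) hc
  have hdp : (Module.finrank ℝ (EuclideanSpace ℝ (Fin n)) : ℝ) / (2 - s) <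
      2 * (((n : ℝ) - 2) / (2 - s)) := by
    rw [hdim]
    linarith
  have hU : U1 n s = fun X => bubbleProfile (kappa n s) (2 - s) (((n : ℝ) - 2) / (2 - s)) ‖X‖ :=
    rfl
  rw [hU, integral_sq_norm_mul_sq_norm_gradient_bubbleProfile volume hc hdp,
    integral_bubbleProfile_norm_sq volume hc hdp, hdim, beta_add_two_left ha (by linarith)]
  have hκ : 0 < kappa n s := Real.rpow_pos_of_pos (by nlinarith) _
  have hball : 0 < volume.real (Metric.ball (0 : EuclideanSpace ℝ (Fin n)) 1) :=
    ENNReal.toReal_pos (Metric.measure_ball_pos volume 0 one_pos).ne' measure_ball_lt_top.ne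
  have hβ := beta_pos ha hb
  have hn2 : (n : ℝ) - 2 ≠ 0 := by linarith
  have hnc : 2 * (n : ℝ) - 2 - s ≠ 0 := by linarith
  -- keeps `field_simp` from normalizing the arguments of `beta`
  generalize beta _ _ = B at hβ ⊢
  field_simp
  ring

theorem stmt_4 (n : ℕ) (hn : 5 ≤ n) (s : ℝ) (hs0 : 0 < s) (hs2 : s < 2) :
    (∫ X : EuclideanSpace ℝ (Fin n), ‖X‖ ^ 2 * ‖gradient (U1 n s) X‖ ^ 2) /
        (∫ X : EuclideanSpace ℝ (Fin n), (U1 n s X) ^ 2) =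
      (n : ℝ) * ((n : ℝ) - 2) * ((n : ℝ) + 2 - s) / (2 * (2 * (n : ℝ) - 2 - s)) :=
  stmt_4_general n hn s hs2
end

section
/- Let n ≥ 5, 0 < s < 2, 2⋆(s) = 2(n-s)/(n-2), and U₁(X) = κ_{n,s}(1+|X|^{2-s})^{-(n-2)/(2-s)} with κ_{n,s} = ((n-s)(n-2))^{(n-2)/(2(2-s))}. Then ∫_{ℝⁿ} |X|^{2-s} U₁^{2⋆(s)} dX / ∫_{ℝⁿ} U₁² dX = κ_{n,s}^{2⋆(s)-2} · n(n-4) / (2(n-2)(2n-2-s)). -/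
/-!
Both integrals are radial. Polar coordinates and the substitution `u = r^(2-s)` turn them into
the beta integrals `J(α, β) = ∫₀^∞ u^(α-1) (1+u)^(-β) du` at `(α, β) = (a+1, b+2)` and `(a, b)`, where
`a = n/(2-s)` and `b = 2(n-2)/(2-s)`; the constant `κ` factors out as `κ^(2⋆(s))`, resp. `κ^2`.
Integration by parts, `α J(α, β) = β J(α+1, β+1)`, together with the splitting
`J(α, β) = J(α, β+1) + J(α+1, β+1)` gives `J(a+1, b+2) = a(b-a)/((b+1)b) J(a, b)`, which is the
stated constant. Convergence (`a < b`) is exactly `n > 4`.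
-/

open MeasureTheory

/-- The critical Hardy-Sobolev exponent `2⋆(s)`. -/
noncomputable def critExp (n : ℕ) (s : ℝ) : ℝ := 2 * ((n : ℝ) - s) / ((n : ℝ) - 2)

open Real Set Filter Topology Metric

/-- The Beta function `B(α, β - α)`, in its form as an integral over `(0, ∞)`. -/
noncomputable def betaPrimeIntegral (α β : ℝ) : ℝ :=
  ∫ u in Ioi (0 : ℝ), u ^ (α - 1) * (1 + u) ^ (-β)

section BetaPrime

variable {α β : ℝ}

theorem integrableOn_betaPrimeIntegrand (hα : 0 < α) (hαβ : α < β) :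
    IntegrableOn (fun u : ℝ => u ^ (α - 1) * (1 + u) ^ (-β)) (Ioi 0) := by
  have hmeas : AEStronglyMeasurable (fun u : ℝ => u ^ (α - 1) * (1 + u) ^ (-β))
      (volume.restrict (Ioi 0)) :=
    Measurable.aestronglyMeasurable (by fun_prop)
  have near_zero : IntegrableOn (fun u : ℝ => u ^ (α - 1) * (1 + u) ^ (-β)) (Ioc 0 1) := by
    have hdom : IntegrableOn (fun u : ℝ => u ^ (α - 1)) (Ioc 0 1) :=
      (intervalIntegrable_iff_integrableOn_Ioc_of_le zero_le_one).1
        (intervalIntegral.intervalIntegrable_rpow' (by linarith))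
    refine hdom.mono' (hmeas.mono_set Ioc_subset_Ioi_self) ?_
    filter_upwards [ae_restrict_mem measurableSet_Ioc] with u hu
    have hu0 : 0 < u := hu.1
    rw [norm_of_nonneg (by positivity)]
    exact mul_le_of_le_one_right (by positivity) (rpow_le_one_of_one_le_of_nonpos
      (by linarith) (by linarith))
  have near_top : IntegrableOn (fun u : ℝ => u ^ (α - 1) * (1 + u) ^ (-β)) (Ioi 1) := by
    have hdom : IntegrableOn (fun u : ℝ => u ^ (α - 1 - β)) (Ioi 1) :=
      integrableOn_Ioi_rpow_of_lt (by linarith) one_pos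
    refine hdom.mono' (hmeas.mono_set (Ioi_subset_Ioi zero_le_one)) ?_
    filter_upwards [ae_restrict_mem measurableSet_Ioi] with u (hu : 1 < u)
    have hu0 : 0 < u := by linarith
    rw [norm_of_nonneg (by positivity), sub_eq_add_neg _ β, rpow_add hu0]
    exact mul_le_mul_of_nonneg_left (rpow_le_rpow_of_nonpos hu0 (by linarith) (by linarith))
      (by positivity)
  rw [← Ioc_union_Ioi_eq_Ioi zero_le_one]
  exact near_zero.union near_top

theorem betaPrimeIntegral_pos (hα : 0 < α) (hαβ : α < β) : 0 < betaPrimeIntegral α β := by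
  refine (setIntegral_pos_iff_support_of_nonneg_ae ?_
    (integrableOn_betaPrimeIntegrand hα hαβ)).2 ?_
  · filter_upwards [ae_restrict_mem measurableSet_Ioi] with u (hu : 0 < u)
    positivity
  · have : (Function.support fun u : ℝ => u ^ (α - 1) * (1 + u) ^ (-β)) ∩ Ioi 0 = Ioi 0 :=
      inter_eq_right.2 fun u (hu : 0 < u) => (by positivity : u ^ (α - 1) * (1 + u) ^ (-β) ≠ 0)
    rw [this]
    simp

theorem betaPrimeIntegral_eq_add (hα : 0 < α) (hαβ : α < β) :
    betaPrimeIntegral α β = betaPrimeIntegral α (β + 1) + betaPrimeIntegral (α + 1) (β + 1) := by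
  rw [betaPrimeIntegral, betaPrimeIntegral, betaPrimeIntegral,
    ← integral_add (integrableOn_betaPrimeIntegrand hα (by linarith))
      (integrableOn_betaPrimeIntegrand (by linarith) (by linarith))]
  refine setIntegral_congr_fun measurableSet_Ioi fun u (hu : 0 < u) => ?_
  have h1u : 1 + u ≠ 0 := by positivity
  have hβ : (1 + u) ^ (-β) = (1 + u) ^ (-(β + 1)) * (1 + u) := by
    rw [← rpow_add_one h1u, neg_add, neg_add_cancel_right]
  rw [hβ, add_sub_cancel_right, rpow_sub_one hu.ne']
  field_simp

/-- Integration by parts against `d/du (u^α (1+u)^(-β))`. -/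
theorem mul_betaPrimeIntegral (hα : 0 < α) (hαβ : α < β) :
    α * betaPrimeIntegral α β = β * betaPrimeIntegral (α + 1) (β + 1) := by
  set F : ℝ → ℝ := fun u => u ^ α * (1 + u) ^ (-β)
  have hderiv : ∀ u ∈ Ioi (0 : ℝ), HasDerivAt F
      (α * (u ^ (α - 1) * (1 + u) ^ (-β)) - β * (u ^ (α + 1 - 1) * (1 + u) ^ (-(β + 1)))) u := by
    intro u (hu : 0 < u)
    refine ((hasDerivAt_rpow_const (Or.inl hu.ne')).mul
      (((hasDerivAt_id' u).const_add 1).rpow_const (Or.inl (by positivity)))).congr_deriv ?_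
    rw [add_sub_cancel_right, neg_add']
    ring
  have hcont : ContinuousWithinAt F (Ici 0) 0 :=
    ((continuousAt_rpow_const 0 α (Or.inr hα.le)).mul
      ((continuousAt_const.add continuousAt_id).rpow_const (Or.inl (by norm_num)))).continuousWithinAt
  have hint := ((integrableOn_betaPrimeIntegrand hα hαβ).const_mul α).sub
    ((integrableOn_betaPrimeIntegrand (α := α + 1) (β := β + 1) (by linarith)
      (by linarith)).const_mul β)
  have htop : Tendsto F atTop (𝓝 0) := by
    have hdecay : Tendsto (fun u : ℝ => u ^ (α - β)) atTop (𝓝 0) := by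
      simpa [neg_sub] using tendsto_rpow_neg_atTop (y := β - α) (by linarith)
    refine squeeze_zero' ?_ ?_ hdecay
    · filter_upwards [eventually_ge_atTop 0] with u hu
      positivity
    · filter_upwards [eventually_gt_atTop 0] with u hu
      rw [sub_eq_add_neg, rpow_add hu]
      exact mul_le_mul_of_nonneg_left (rpow_le_rpow_of_nonpos hu (by linarith) (by linarith))
        (by positivity)
  have key := integral_Ioi_of_hasDerivAt_of_tendsto hcont hderiv hint htop
  rw [integral_sub ((integrableOn_betaPrimeIntegrand hα hαβ).const_mul α)
    ((integrableOn_betaPrimeIntegrand (by linarith) (by linarith)).const_mul β),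
    integral_const_mul, integral_const_mul] at key
  simp only [F, zero_rpow hα.ne', zero_mul, sub_zero] at key
  exact sub_eq_zero.1 key

theorem betaPrimeIntegral_add_one_add_two (hα : 0 < α) (hαβ : α < β) :
    betaPrimeIntegral (α + 1) (β + 2) =
      α * (β - α) / ((β + 1) * β) * betaPrimeIntegral α β := by
  have hβ : 0 < β := hα.trans hαβ
  have h1 : α * betaPrimeIntegral α (β + 1) = (β + 1) * betaPrimeIntegral (α + 1) (β + 2) := by
    rw [mul_betaPrimeIntegral hα (by linarith), add_assoc, one_add_one_eq_two]
  have h2 := mul_betaPrimeIntegral hα hαβ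
  have h3 := betaPrimeIntegral_eq_add hα hαβ
  rw [div_mul_eq_mul_div, eq_div_iff (by positivity)]
  linear_combination (-β) * h1 - α * β * h3 + α * h2

end BetaPrime

theorem integral_Ioi_rpow_mul_one_add_rpow {c : ℝ} (hc : 0 < c) (m β : ℝ) :
    ∫ y in Ioi (0 : ℝ), y ^ m * (1 + y ^ c) ^ (-β) = betaPrimeIntegral ((m + 1) / c) β / c := by
  rw [betaPrimeIntegral, ← integral_div,
    ← integral_comp_rpow_Ioi (fun u => u ^ ((m + 1) / c - 1) * (1 + u) ^ (-β) / c) hc.ne']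
  refine setIntegral_congr_fun measurableSet_Ioi fun y (hy : 0 < y) => ?_
  have hexp : y ^ m = y ^ (c - 1) * y ^ (c * ((m + 1) / c - 1)) := by
    rw [← rpow_add hy]
    congr 1
    field_simp
    ring
  rw [smul_eq_mul, abs_of_pos hc, ← rpow_mul hy.le, hexp]
  field_simp

theorem integral_norm_rpow_mul_one_add_norm_rpow {E : Type*} [NormedAddCommGroup E]
    [NormedSpace ℝ E] [FiniteDimensional ℝ E] [Nontrivial E] [MeasurableSpace E] [BorelSpace E]
    (μ : Measure E) [μ.IsAddHaarMeasure] {c : ℝ} (hc : 0 < c) (m β : ℝ) :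
    ∫ x, ‖x‖ ^ m * (1 + ‖x‖ ^ c) ^ (-β) ∂μ =
      Module.finrank ℝ E * μ.real (ball 0 1) / c *
        betaPrimeIntegral ((Module.finrank ℝ E + m) / c) β := by
  have hd : 1 ≤ Module.finrank ℝ E := Module.finrank_pos
  rw [integral_fun_norm_addHaar μ (fun r => r ^ m * (1 + r ^ c) ^ (-β)), nsmul_eq_mul,
    smul_eq_mul]
  have hradial : ∫ y in Ioi (0 : ℝ), y ^ (Module.finrank ℝ E - 1) • (y ^ m * (1 + y ^ c) ^ (-β)) =
      ∫ y in Ioi (0 : ℝ), y ^ (Module.finrank ℝ E - 1 + m) * (1 + y ^ c) ^ (-β) := by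
    refine setIntegral_congr_fun measurableSet_Ioi fun y (hy : 0 < y) => ?_
    rw [smul_eq_mul, ← mul_assoc, rpow_add hy, ← rpow_natCast, Nat.cast_sub hd, Nat.cast_one]
  rw [hradial, integral_Ioi_rpow_mul_one_add_rpow hc]
  ring_nf

theorem kappa_pos {n : ℕ} {s : ℝ} (hn : 2 < n) (hs : s < 2) : 0 < kappa n s := by
  have hn' : (2 : ℝ) < n := by exact_mod_cast hn
  exact rpow_pos_of_pos (mul_pos (by linarith) (by linarith)) _

theorem U1_rpow {n : ℕ} {s : ℝ} (hκ : 0 ≤ kappa n s) (t : ℝ) (X : EuclideanSpace ℝ (Fin n)) :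
    U1 n s X ^ t = kappa n s ^ t * (1 + ‖X‖ ^ (2 - s)) ^ (-(((n : ℝ) - 2) / (2 - s) * t)) := by
  rw [U1, mul_rpow hκ (by positivity), ← rpow_mul (by positivity), neg_mul]

theorem integral_norm_rpow_mul_U1_rpow {n : ℕ} [NeZero n] {s : ℝ} (hs : s < 2)
    (hκ : 0 ≤ kappa n s) (m t : ℝ) :
    ∫ X : EuclideanSpace ℝ (Fin n), ‖X‖ ^ m * U1 n s X ^ t =
      kappa n s ^ t * (n * volume.real (ball (0 : EuclideanSpace ℝ (Fin n)) 1) / (2 - s) *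
        betaPrimeIntegral ((n + m) / (2 - s)) (((n : ℝ) - 2) / (2 - s) * t)) := by
  simp_rw [U1_rpow hκ, mul_left_comm _ (kappa n s ^ t)]
  rw [integral_const_mul, integral_norm_rpow_mul_one_add_norm_rpow volume (by linarith),
    finrank_euclideanSpace_fin]

theorem stmt_5_general (n : ℕ) (hn : 5 ≤ n) (s : ℝ) (hs2 : s < 2) :
    (∫ X : EuclideanSpace ℝ (Fin n), ‖X‖ ^ (2 - s) * (U1 n s X) ^ (critExp n s)) /
        (∫ X : EuclideanSpace ℝ (Fin n), (U1 n s X) ^ 2) =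
      kappa n s ^ (critExp n s - 2) *
        ((n : ℝ) * ((n : ℝ) - 4) / (2 * ((n : ℝ) - 2) * (2 * (n : ℝ) - 2 - s))) := by
  have : NeZero n := ⟨by omega⟩
  have hn' : (5 : ℝ) ≤ n := by exact_mod_cast hn
  have hc : 0 < 2 - s := by linarith
  have hn2 : (n : ℝ) - 2 ≠ 0 := by linarith
  have hκ : 0 < kappa n s := kappa_pos (by omega) hs2
  have ha : 0 < n / (2 - s) := by positivity
  have hab : n / (2 - s) < 2 * ((n : ℝ) - 2) / (2 - s) :=
    div_lt_div_of_pos_right (by linarith) hc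
  have hnum := integral_norm_rpow_mul_U1_rpow hs2 hκ.le (2 - s) (critExp n s)
  have hden := integral_norm_rpow_mul_U1_rpow hs2 hκ.le 0 2
  rw [add_div, div_self hc.ne', show ((n : ℝ) - 2) / (2 - s) * critExp n s =
    2 * ((n : ℝ) - 2) / (2 - s) + 2 by rw [critExp]; field_simp; ring] at hnum
  simp only [rpow_zero, one_mul, rpow_two, add_zero, div_mul_eq_mul_div _ _ (2 : ℝ),
    mul_comm _ (2 : ℝ)] at hden
  rw [hnum, hden, betaPrimeIntegral_add_one_add_two ha hab, rpow_sub hκ, rpow_two]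
  have hJ := betaPrimeIntegral_pos ha hab
  have hball : 0 < volume.real (ball (0 : EuclideanSpace ℝ (Fin n)) 1) :=
    ENNReal.toReal_pos (measure_ball_pos volume 0 one_pos).ne' measure_ball_lt_top.ne
  field_simp
  ring

theorem stmt_5 (n : ℕ) (hn : 5 ≤ n) (s : ℝ) (hs0 : 0 < s) (hs2 : s < 2) :
    (∫ X : EuclideanSpace ℝ (Fin n), ‖X‖ ^ (2 - s) * (U1 n s X) ^ (critExp n s)) /
        (∫ X : EuclideanSpace ℝ (Fin n), (U1 n s X) ^ 2) =
      kappa n s ^ (critExp n s - 2) *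
        ((n : ℝ) * ((n : ℝ) - 4) / (2 * ((n : ℝ) - 2) * (2 * (n : ℝ) - 2 - s))) :=
  stmt_5_general n hn s hs2
end

section
/- Let n ≥ 7 and 0 < s < 2. With U₁(X) = κ_{n,s}(1+|X|^{2-s})^{-(n-2)/(2-s)}, one has ∫_{ℝⁿ}|X|⁴|∇U₁|² dX / ∫_{ℝⁿ}|X|²U₁² dX = (n-2)(n+2)(n+4-s) / (2(2n-2-s)). -/
/-!
`U₁(X) = κ φ(|X|)` with `φ(r) = (1 + r^σ)^(-p)`, `σ = 2 - s` and `pσ = n - 2`, so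
`|∇U₁(X)| = κ |φ'(|X|)|`. In polar coordinates both integrals become moments
`J(a, m) = bubbleMoment σ a m = ∫₀^∞ r^a (1 + r^σ)^(-m) dr`: the numerator is
`n |B₁| (κpσ)² J(n + 1 + 2σ, 2p + 2)` and the denominator `n |B₁| κ² J(n + 1, 2p)`.
Integration by parts gives `(a + 1) J(a, m) = mσ J(a + σ, m + 1)`, which links the two moments
through `J(n + 1 + σ, 2p + 1)` and yields the ratio. All moments involved are finite exactly
when `n > 6`.
-/

open MeasureTheory

open Set Real Filter Topology

noncomputable def bubbleMoment (σ a m : ℝ) : ℝ :=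
  ∫ r in Ioi (0 : ℝ), r ^ a * (1 + r ^ σ) ^ (-m)

lemma one_add_rpow_rpow_neg_le_one {r σ m : ℝ} (hr : 0 ≤ r) (hm : 0 ≤ m) :
    (1 + r ^ σ) ^ (-m) ≤ 1 :=
  rpow_le_one_of_one_le_of_nonpos (le_add_of_nonneg_right (rpow_nonneg hr σ)) (neg_nonpos.2 hm)

lemma one_add_rpow_rpow_neg_le {r σ m : ℝ} (hr : 0 < r) (hm : 0 ≤ m) :
    (1 + r ^ σ) ^ (-m) ≤ r ^ (-(m * σ)) := by
  calc (1 + r ^ σ) ^ (-m) ≤ (r ^ σ) ^ (-m) :=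
        rpow_le_rpow_of_nonpos (rpow_pos_of_pos hr σ) (le_add_of_nonneg_left zero_le_one)
          (neg_nonpos.2 hm)
    _ = r ^ (-(m * σ)) := by rw [← rpow_mul hr.le]; ring_nf

lemma hasDerivAt_one_add_rpow_rpow_neg {r : ℝ} (σ p : ℝ) (hr : 0 < r) :
    HasDerivAt (fun r : ℝ => (1 + r ^ σ) ^ (-p))
      (-(p * σ) * r ^ (σ - 1) * (1 + r ^ σ) ^ (-p - 1)) r := by
  have h := (((hasDerivAt_rpow_const (p := σ) (Or.inl hr.ne')).const_add 1).rpow_const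
    (p := -p) (Or.inl (by positivity)))
  convert h using 1
  ring

lemma continuousOn_rpow_mul_one_add_rpow_rpow (σ a m : ℝ) :
    ContinuousOn (fun r : ℝ => r ^ a * (1 + r ^ σ) ^ (-m)) (Ioi 0) := by
  intro r (hr : 0 < r)
  exact ((continuousAt_rpow_const _ _ (Or.inl hr.ne')).mul
    ((continuousAt_const.add (continuousAt_rpow_const _ _ (Or.inl hr.ne'))).rpow_const
      (Or.inl (add_pos_of_pos_of_nonneg one_pos (rpow_nonneg hr.le σ)).ne'))).continuousWithinAt

lemma integrableOn_rpow_mul_one_add_rpow_rpow {σ a m : ℝ} (ha : -1 < a) (hm : 0 ≤ m)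
    (h : a - m * σ < -1) :
    IntegrableOn (fun r : ℝ => r ^ a * (1 + r ^ σ) ^ (-m)) (Ioi 0) := by
  have hmeas := (continuousOn_rpow_mul_one_add_rpow_rpow σ a m).aestronglyMeasurable
    (μ := volume) measurableSet_Ioi
  rw [← Ioc_union_Ioi_eq_Ioi zero_le_one]
  refine IntegrableOn.union ?_ ?_
  · have hg : IntegrableOn (fun r : ℝ => r ^ a) (Ioc 0 1) :=
      (intervalIntegrable_iff_integrableOn_Ioc_of_le zero_le_one).1
        (intervalIntegral.intervalIntegrable_rpow' ha)
    refine hg.mono' (hmeas.mono_set Ioc_subset_Ioi_self) ?_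
    filter_upwards [ae_restrict_mem measurableSet_Ioc] with r hr
    obtain ⟨hr, -⟩ := hr
    rw [norm_of_nonneg (by positivity)]
    exact mul_le_of_le_one_right (by positivity) (one_add_rpow_rpow_neg_le_one hr.le hm)
  · refine (integrableOn_Ioi_rpow_of_lt h one_pos).mono'
      (hmeas.mono_set (Ioi_subset_Ioi zero_le_one)) ?_
    filter_upwards [ae_restrict_mem measurableSet_Ioi] with r (hr : 1 < r)
    have hr0 : 0 < r := one_pos.trans hr
    rw [norm_of_nonneg (by positivity), sub_eq_add_neg, rpow_add hr0]
    exact mul_le_mul_of_nonneg_left (one_add_rpow_rpow_neg_le hr0 hm) (by positivity)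

lemma bubbleMoment_pos {σ a m : ℝ} (ha : -1 < a) (hm : 0 ≤ m) (h : a - m * σ < -1) :
    0 < bubbleMoment σ a m := by
  have hpos : ∀ r ∈ Ioi (0 : ℝ), 0 < r ^ a * (1 + r ^ σ) ^ (-m) := fun r (hr : 0 < r) => by
    positivity
  have hnn : 0 ≤ᵐ[volume.restrict (Ioi 0)] fun r : ℝ => r ^ a * (1 + r ^ σ) ^ (-m) := by
    filter_upwards [ae_restrict_mem measurableSet_Ioi] with r hr using (hpos r hr).le
  rw [bubbleMoment, setIntegral_pos_iff_support_of_nonneg_ae hnn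
    (integrableOn_rpow_mul_one_add_rpow_rpow ha hm h)]
  have hsupp : Function.support (fun r : ℝ => r ^ a * (1 + r ^ σ) ^ (-m)) ∩ Ioi 0 = Ioi 0 :=
    inter_eq_right.2 fun r hr => (hpos r hr).ne'
  rw [hsupp]
  simp

lemma tendsto_rpow_mul_one_add_rpow_rpow_atTop {σ b m : ℝ} (hm : 0 ≤ m) (h : b < m * σ) :
    Tendsto (fun r : ℝ => r ^ b * (1 + r ^ σ) ^ (-m)) atTop (𝓝 0) := by
  have hdom : Tendsto (fun r : ℝ => r ^ (-(m * σ - b))) atTop (𝓝 0) :=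
    tendsto_rpow_neg_atTop (sub_pos.2 h)
  refine tendsto_of_tendsto_of_tendsto_of_le_of_le' tendsto_const_nhds hdom ?_ ?_
  · filter_upwards [eventually_gt_atTop 0] with r hr using by positivity
  · filter_upwards [eventually_gt_atTop 0] with r hr
    rw [show -(m * σ - b) = b + -(m * σ) by ring, rpow_add hr]
    exact mul_le_mul_of_nonneg_left (one_add_rpow_rpow_neg_le hr hm) (by positivity)

/-- Integration by parts; the boundary term `r^(a+1) (1 + r^σ)^(-m)` vanishes at `0` and `∞`. -/
theorem bubbleMoment_recurrence {σ a m : ℝ} (ha : -1 < a) (hm : 0 < m) (h : a + 1 < m * σ) :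
    (a + 1) * bubbleMoment σ a m = m * σ * bubbleMoment σ (a + σ) (m + 1) := by
  have hσ : 0 < σ := pos_of_mul_pos_right (by linarith : 0 < m * σ) hm.le
  have hint := integrableOn_rpow_mul_one_add_rpow_rpow ha hm.le (by linarith)
  have hint' := integrableOn_rpow_mul_one_add_rpow_rpow (σ := σ) (a := a + σ) (m := m + 1)
    (by nlinarith) (by linarith) (by linarith)
  have hderiv : ∀ r ∈ Ioi (0 : ℝ), HasDerivAt (fun r : ℝ => r ^ (a + 1) * (1 + r ^ σ) ^ (-m))
      ((a + 1) * (r ^ a * (1 + r ^ σ) ^ (-m)) -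
        m * σ * (r ^ (a + σ) * (1 + r ^ σ) ^ (-(m + 1)))) r := by
    intro r (hr : 0 < r)
    refine ((hasDerivAt_rpow_const (p := a + 1) (Or.inl hr.ne')).mul
      (hasDerivAt_one_add_rpow_rpow_neg σ m hr)).congr_deriv ?_
    have hexp : r ^ (a + σ) = r ^ (a + 1) * r ^ (σ - 1) := by
      rw [← rpow_add hr]; ring_nf
    rw [add_sub_cancel_right, hexp, show -(m + 1) = -m - 1 by ring]
    ring
  have hcont : ContinuousWithinAt (fun r : ℝ => r ^ (a + 1) * (1 + r ^ σ) ^ (-m)) (Ici 0) 0 :=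
    (((continuousAt_id.rpow_const (Or.inr (by linarith))).mul
      ((continuousAt_const.add (continuousAt_id.rpow_const (Or.inr hσ.le))).rpow_const
        (Or.inl (by simp [zero_rpow hσ.ne'])))).continuousWithinAt)
  have key := integral_Ioi_of_hasDerivAt_of_tendsto hcont hderiv
    ((hint.const_mul _).sub (hint'.const_mul _))
    (tendsto_rpow_mul_one_add_rpow_rpow_atTop hm.le h)
  rw [integral_sub (hint.const_mul _) (hint'.const_mul _), integral_const_mul,
    integral_const_mul, zero_rpow (by linarith), zero_mul, sub_zero] at key
  rw [bubbleMoment, bubbleMoment]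
  linarith

theorem integral_rpow_mul_one_add_rpow_rpow_norm {E : Type*} [NormedAddCommGroup E]
    [NormedSpace ℝ E] [FiniteDimensional ℝ E] [MeasurableSpace E] [BorelSpace E] [Nontrivial E]
    (μ : Measure E) [μ.IsAddHaarMeasure] (c σ b m : ℝ) :
    ∫ x, c * (‖x‖ ^ b * (1 + ‖x‖ ^ σ) ^ (-m)) ∂μ =
      Module.finrank ℝ E * μ.real (Metric.ball (0 : E) 1) * c *
        bubbleMoment σ (Module.finrank ℝ E - 1 + b) m := by
  have hd : 1 ≤ Module.finrank ℝ E := Module.finrank_pos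
  have hradial :
      ∫ r in Ioi (0 : ℝ), r ^ (Module.finrank ℝ E - 1) • (c * (r ^ b * (1 + r ^ σ) ^ (-m))) =
        c * bubbleMoment σ (Module.finrank ℝ E - 1 + b) m := by
    rw [bubbleMoment, ← integral_const_mul]
    refine setIntegral_congr_fun measurableSet_Ioi fun r (hr : 0 < r) => ?_
    rw [smul_eq_mul, rpow_add hr, ← Nat.cast_one (R := ℝ), ← Nat.cast_sub hd, rpow_natCast]
    ring
  rw [integral_fun_norm_addHaar μ (fun r => c * (r ^ b * (1 + r ^ σ) ^ (-m))), hradial,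
    nsmul_eq_mul, smul_eq_mul]
  ring

theorem norm_gradient_comp_norm_s9 {E : Type*} [NormedAddCommGroup E] [InnerProductSpace ℝ E]
    [CompleteSpace E] {φ : ℝ → ℝ} {φ' : ℝ} {x : E} (hx : x ≠ 0) (hφ : HasDerivAt φ φ' ‖x‖) :
    ‖gradient (fun y => φ ‖y‖) x‖ = |φ'| := by
  have : Nontrivial E := ⟨⟨x, 0, hx⟩⟩
  have hd : DifferentiableAt ℝ (‖·‖) x := (contDiffAt_norm ℝ hx).differentiableAt one_ne_zero
  have hcomp : HasFDerivAt (fun y => φ ‖y‖) (φ' • fderiv ℝ (‖·‖) x) x :=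
    hφ.comp_hasFDerivAt x hd.hasFDerivAt
  rw [gradient, LinearIsometryEquiv.norm_map, hcomp.fderiv, norm_smul, norm_fderiv_norm hd,
    mul_one, norm_eq_abs]

theorem norm_pow_four_mul_norm_gradient_one_add_rpow_sq {E : Type*} [NormedAddCommGroup E]
    [InnerProductSpace ℝ E] [CompleteSpace E] (κ p : ℝ) {σ : ℝ} (hσ : 0 < σ) (x : E) :
    ‖x‖ ^ 4 * ‖gradient (fun y : E => κ * (1 + ‖y‖ ^ σ) ^ (-p)) x‖ ^ 2 =
      (κ * p * σ) ^ 2 * (‖x‖ ^ (2 * σ + 2) * (1 + ‖x‖ ^ σ) ^ (-(2 * p + 2))) := by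
  rcases eq_or_ne x 0 with rfl | hx
  · simp [zero_rpow (by linarith : 2 * σ + 2 ≠ 0)]
  have hr : 0 < ‖x‖ := norm_pos_iff.2 hx
  rw [norm_gradient_comp_norm_s9 hx ((hasDerivAt_one_add_rpow_rpow_neg σ p hr).const_mul κ), sq_abs]
  have hpow : ‖x‖ ^ (2 * σ + 2) = ‖x‖ ^ 4 * (‖x‖ ^ (σ - 1)) ^ 2 := by
    rw [← rpow_natCast, ← rpow_natCast, ← rpow_mul hr.le, ← rpow_add hr]
    ring_nf
  have hbase : (1 + ‖x‖ ^ σ) ^ (-(2 * p + 2)) = ((1 + ‖x‖ ^ σ) ^ (-p - 1)) ^ 2 := by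
    rw [← rpow_natCast, ← rpow_mul (by positivity)]
    ring_nf
  rw [hpow, hbase]
  ring

theorem norm_sq_mul_one_add_rpow_sq {E : Type*} [NormedAddCommGroup E] (κ σ p : ℝ) (x : E) :
    ‖x‖ ^ 2 * (κ * (1 + ‖x‖ ^ σ) ^ (-p)) ^ 2 =
      κ ^ 2 * (‖x‖ ^ (2 : ℝ) * (1 + ‖x‖ ^ σ) ^ (-(2 * p))) := by
  have hbase : ((1 + ‖x‖ ^ σ) ^ (-p)) ^ 2 = (1 + ‖x‖ ^ σ) ^ (-(2 * p)) := by
    rw [← rpow_natCast, ← rpow_mul (by positivity)]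
    ring_nf
  rw [rpow_two, mul_pow, hbase]
  ring

theorem integral_norm_pow_four_mul_norm_gradient_one_add_rpow_sq {E : Type*}
    [NormedAddCommGroup E] [InnerProductSpace ℝ E] [FiniteDimensional ℝ E] [MeasurableSpace E]
    [BorelSpace E] [Nontrivial E] (μ : Measure E) [μ.IsAddHaarMeasure] (κ p : ℝ) {σ : ℝ}
    (hσ : 0 < σ) :
    ∫ x, ‖x‖ ^ 4 * ‖gradient (fun y : E => κ * (1 + ‖y‖ ^ σ) ^ (-p)) x‖ ^ 2 ∂μ =
      Module.finrank ℝ E * μ.real (Metric.ball (0 : E) 1) * (κ * p * σ) ^ 2 *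
        bubbleMoment σ (Module.finrank ℝ E + 1 + 2 * σ) (2 * p + 2) := by
  simp_rw [norm_pow_four_mul_norm_gradient_one_add_rpow_sq κ p hσ,
    integral_rpow_mul_one_add_rpow_rpow_norm]
  ring_nf

theorem integral_norm_sq_mul_one_add_rpow_sq {E : Type*} [NormedAddCommGroup E]
    [NormedSpace ℝ E] [FiniteDimensional ℝ E] [MeasurableSpace E] [BorelSpace E] [Nontrivial E]
    (μ : Measure E) [μ.IsAddHaarMeasure] (κ σ p : ℝ) :
    ∫ x, ‖x‖ ^ 2 * (κ * (1 + ‖x‖ ^ σ) ^ (-p)) ^ 2 ∂μ =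
      Module.finrank ℝ E * μ.real (Metric.ball (0 : E) 1) * κ ^ 2 *
        bubbleMoment σ (Module.finrank ℝ E + 1) (2 * p) := by
  simp_rw [norm_sq_mul_one_add_rpow_sq, integral_rpow_mul_one_add_rpow_rpow_norm]
  ring_nf

theorem stmt_9_general (n : ℕ) (hn : 7 ≤ n) (s : ℝ) (hs2 : s < 2) :
    (∫ X : EuclideanSpace ℝ (Fin n), ‖X‖ ^ 4 * ‖gradient (U1 n s) X‖ ^ 2) /
        (∫ X : EuclideanSpace ℝ (Fin n), ‖X‖ ^ 2 * (U1 n s X) ^ 2) =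
      ((n : ℝ) - 2) * ((n : ℝ) + 2) * ((n : ℝ) + 4 - s) / (2 * (2 * (n : ℝ) - 2 - s)) := by
  have hσ : 0 < 2 - s := by linarith
  have hn' : (7 : ℝ) ≤ n := by exact_mod_cast hn
  have : Nontrivial (EuclideanSpace ℝ (Fin n)) :=
    Module.nontrivial_of_finrank_pos (R := ℝ) (by rw [finrank_euclideanSpace_fin]; omega)
  unfold U1
  rw [integral_norm_pow_four_mul_norm_gradient_one_add_rpow_sq _ _ _ hσ,
    integral_norm_sq_mul_one_add_rpow_sq, finrank_euclideanSpace_fin]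
  generalize hp : ((n : ℝ) - 2) / (2 - s) = p
  have hpσ : p * (2 - s) = n - 2 := hp ▸ div_mul_cancel₀ _ hσ.ne'
  have hp0 : 0 < p := hp ▸ div_pos (by linarith) hσ
  have hκ : 0 < kappa n s := rpow_pos_of_pos (by nlinarith) _
  have hV : 0 < volume.real (Metric.ball (0 : EuclideanSpace ℝ (Fin n)) 1) :=
    ENNReal.toReal_pos (Metric.measure_ball_pos _ _ one_pos).ne' measure_ball_lt_top.ne
  have hJ₀ := bubbleMoment_pos (σ := 2 - s) (a := n + 1) (m := 2 * p)
    (by linarith) (by positivity) (by nlinarith)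
  have rel₁ := bubbleMoment_recurrence (σ := 2 - s) (a := n + 1) (m := 2 * p)
    (by linarith) (by positivity) (by nlinarith)
  have rel₂ := bubbleMoment_recurrence (σ := 2 - s) (a := n + 1 + (2 - s)) (m := 2 * p + 1)
    (by linarith) (by positivity) (by nlinarith)
  rw [show (n : ℝ) + 1 + 2 * (2 - s) = n + 1 + (2 - s) + (2 - s) by ring,
    show 2 * p + 2 = 2 * p + 1 + 1 by ring, div_eq_div_iff (by positivity) (by nlinarith)]
  set K := n * volume.real (Metric.ball (0 : EuclideanSpace ℝ (Fin n)) 1) * kappa n s ^ 2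
  set J₂ := bubbleMoment (2 - s) (n + 1 + (2 - s) + (2 - s)) (2 * p + 1 + 1)
  linear_combination (-K * (n - 2) * (n + 4 - s)) * rel₁
    + (-2 * K * (n - 2) * p * (2 - s)) * rel₂ + (2 * K * J₂ * p * (2 - s) ^ 2) * hpσ

theorem stmt_9 (n : ℕ) (hn : 7 ≤ n) (s : ℝ) (hs0 : 0 < s) (hs2 : s < 2) :
    (∫ X : EuclideanSpace ℝ (Fin n), ‖X‖ ^ 4 * ‖gradient (U1 n s) X‖ ^ 2) /
        (∫ X : EuclideanSpace ℝ (Fin n), ‖X‖ ^ 2 * (U1 n s X) ^ 2) =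
      ((n : ℝ) - 2) * ((n : ℝ) + 2) * ((n : ℝ) + 4 - s) / (2 * (2 * (n : ℝ) - 2 - s)) :=
  stmt_9_general n hn s hs2
end
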